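/- arXiv:2109.08352 — 3 statements merged into one kernel-verified Lean document; each statement's English description precedes it below -/
import Mathlib

section
/- Let $X$ be a Banach space, $\alpha>0$, $\beta>0$, $0\le\theta<1$, and let $(S_\tau)_{\tau>0}$ be a family of bounded linear operators on $X$ with $\|S_\tau x\| \le \alpha(\tau^{-\theta}+1)e^{-\beta\tau}\|x\|$ for all $\tau>0$, $x\in X$. If $H:\mathbb{R}\to X$ is almost periodic, then the function $\hat S H(t) := \int_0^\infty S_\tau H(t-\tau)\,d\tau$ is well-defined, bounded, and almost periodic, with $\sup_t\|\hat S H(t)\| \le \alpha(\beta^{\theta-1}\Gamma(1-\theta)+\tfrac1\beta)\sup_t\|H(t)\|$. Moreover for any $T\in\mathbb{R}$, $\sup_t\|\hat S H(t+T)-\hat S H(t)\| \le \alpha(\beta^{\theta-1}\Gamma(1-\theta)+\tfrac1\beta)\sup_t\|H(t+T)-H(t)\|$. -/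
open MeasureTheory Real

/-- Bohr almost periodicity. -/
def IsAlmostPeriodic {X : Type*} [NormedAddCommGroup X] (h : ℝ → X) : Prop :=
  Continuous h ∧ ∀ ε > (0:ℝ), ∃ ℓ > (0:ℝ), ∀ a : ℝ,
    ∃ T ∈ Set.Icc a (a + ℓ), ∀ t : ℝ, ‖h (t + T) - h t‖ < ε

/-!
The hypothesis on `S` dominates `‖S τ‖` on `(0, ∞)` by the kernel
`g τ = α (τ ^ (-θ) + 1) e ^ (-β τ)`, which is integrable with integral
`C = α (β ^ (θ - 1) Γ(1 - θ) + 1 / β)` (a Gamma integral plus an exponential one).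
Hence the convolution is bounded by `C · sup ‖H‖` and continuous by dominated convergence.
Being translation invariant, it maps `H(· + T) - H` to its own increment, so that increment is
at most `C · sup ‖H(· + T) - H‖`; every `ε / (C + 1)`-almost period of `H` is therefore an
`ε`-almost period of the convolution.
-/

open Set Filter

theorem IsAlmostPeriodic.of_norm_shift_sub_le {X Y : Type*} [NormedAddCommGroup X]
    [NormedAddCommGroup Y] {H : ℝ → X} {F : ℝ → Y} {C : ℝ} (hH : IsAlmostPeriodic H)
    (hF : Continuous F) (hC : 0 ≤ C)
    (hshift : ∀ T ε : ℝ, (∀ t, ‖H (t + T) - H t‖ ≤ ε) →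
      ∀ t, ‖F (t + T) - F t‖ ≤ C * ε) :
    IsAlmostPeriodic F := by
  refine ⟨hF, fun ε hε => ?_⟩
  obtain ⟨ℓ, hℓ, hper⟩ := hH.2 (ε / (C + 1)) (by positivity)
  refine ⟨ℓ, hℓ, fun a => ?_⟩
  obtain ⟨T, hT, hHT⟩ := hper a
  refine ⟨T, hT, fun t => ?_⟩
  calc ‖F (t + T) - F t‖ ≤ C * (ε / (C + 1)) := hshift T _ (fun s => (hHT s).le) t
    _ < ε := by rw [mul_div_assoc', div_lt_iff₀ (by positivity)]; nlinarith

theorem integrableOn_rpow_neg_mul_exp_neg_mul {β θ : ℝ} (hβ : 0 < β) (hθ : θ < 1) :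
    IntegrableOn (fun τ : ℝ => τ ^ (-θ) * exp (-β * τ)) (Ioi 0) := by
  simpa using integrableOn_rpow_mul_exp_neg_mul_rpow (p := 1) (by linarith) one_pos hβ

theorem integral_rpow_neg_mul_exp_neg_mul {β θ : ℝ} (hβ : 0 < β) (hθ : θ < 1) :
    ∫ τ in Ioi (0:ℝ), τ ^ (-θ) * exp (-β * τ) = β ^ (θ - 1) * Gamma (1 - θ) := by
  have h := integral_rpow_mul_exp_neg_mul_Ioi (a := 1 - θ) (by linarith) hβ
  rw [sub_sub_cancel_left, one_div, inv_rpow hβ.le, ← rpow_neg hβ.le, neg_sub] at h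
  simpa only [neg_mul] using h

theorem integral_exp_neg_mul_Ioi_zero {β : ℝ} (hβ : 0 < β) :
    ∫ τ in Ioi (0:ℝ), exp (-β * τ) = 1 / β := by
  rw [integral_exp_mul_Ioi (neg_neg_of_pos hβ), mul_zero, exp_zero, neg_div_neg_eq]

theorem integrableOn_singular_exp_kernel {α β θ : ℝ} (hβ : 0 < β) (hθ : θ < 1) :
    IntegrableOn (fun τ : ℝ => α * (τ ^ (-θ) + 1) * exp (-β * τ)) (Ioi 0) := by
  simp_rw [mul_assoc, add_mul, one_mul]
  exact ((integrableOn_rpow_neg_mul_exp_neg_mul hβ hθ).add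
    (exp_neg_integrableOn_Ioi 0 hβ)).const_mul α

theorem integral_singular_exp_kernel {α β θ : ℝ} (hβ : 0 < β) (hθ : θ < 1) :
    ∫ τ in Ioi (0:ℝ), α * (τ ^ (-θ) + 1) * exp (-β * τ) =
      α * (β ^ (θ - 1) * Gamma (1 - θ) + 1 / β) := by
  simp_rw [mul_assoc, add_mul, one_mul]
  rw [integral_const_mul, integral_add (integrableOn_rpow_neg_mul_exp_neg_mul hβ hθ)
    (exp_neg_integrableOn_Ioi 0 hβ), integral_rpow_neg_mul_exp_neg_mul hβ hθ,
    integral_exp_neg_mul_Ioi_zero hβ]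

section OperatorIntegral

variable {ι E F : Type*} [MeasurableSpace ι] {μ : Measure ι} [NormedAddCommGroup E]
  [NormedSpace ℝ E] [NormedAddCommGroup F] [NormedSpace ℝ F] {S : ι → E →L[ℝ] F} {g : ι → ℝ}

theorem ae_norm_apply_le_mul (hS : ∀ᵐ τ ∂μ, ∀ x, ‖S τ x‖ ≤ g τ * ‖x‖) (hg : 0 ≤ᵐ[μ] g)
    {f : ι → E} {M : ℝ} (hf : ∀ τ, ‖f τ‖ ≤ M) :
    ∀ᵐ τ ∂μ, ‖S τ (f τ)‖ ≤ g τ * M := by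
  filter_upwards [hS, hg] with τ hSτ hgτ
  exact (hSτ (f τ)).trans (mul_le_mul_of_nonneg_left (hf τ) hgτ)

theorem integrable_apply_of_norm_le (hS : ∀ᵐ τ ∂μ, ∀ x, ‖S τ x‖ ≤ g τ * ‖x‖)
    (hg : 0 ≤ᵐ[μ] g) (hgi : Integrable g μ) {f : ι → E} {M : ℝ} (hf : ∀ τ, ‖f τ‖ ≤ M)
    (hfm : AEStronglyMeasurable (fun τ => S τ (f τ)) μ) :
    Integrable (fun τ => S τ (f τ)) μ :=
  (hgi.mul_const M).mono' hfm (ae_norm_apply_le_mul hS hg hf)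

theorem norm_integral_apply_le (hS : ∀ᵐ τ ∂μ, ∀ x, ‖S τ x‖ ≤ g τ * ‖x‖)
    (hg : 0 ≤ᵐ[μ] g) (hgi : Integrable g μ) {f : ι → E} {M : ℝ} (hf : ∀ τ, ‖f τ‖ ≤ M) :
    ‖∫ τ, S τ (f τ) ∂μ‖ ≤ (∫ τ, g τ ∂μ) * M := by
  rw [← integral_mul_const]
  exact norm_integral_le_of_norm_le (hgi.mul_const M) (ae_norm_apply_le_mul hS hg hf)

end OperatorIntegral

section Convolution

variable {E F : Type*} [NormedAddCommGroup E] [NormedSpace ℝ E] [NormedAddCommGroup F]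
  [NormedSpace ℝ F] {μ : Measure ℝ} {S : ℝ → E →L[ℝ] F} {g : ℝ → ℝ} {H : ℝ → E}

theorem continuous_integral_apply_sub (hS : ∀ᵐ τ ∂μ, ∀ x, ‖S τ x‖ ≤ g τ * ‖x‖)
    (hg : 0 ≤ᵐ[μ] g) (hgi : Integrable g μ) (hH : Continuous H) {K : ℝ}
    (hK : ∀ t, ‖H t‖ ≤ K) (hm : ∀ t, AEStronglyMeasurable (fun τ => S τ (H (t - τ))) μ) :
    Continuous fun t => ∫ τ, S τ (H (t - τ)) ∂μ :=
  continuous_of_dominated hm (fun t => ae_norm_apply_le_mul hS hg fun τ => hK (t - τ))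
    (hgi.mul_const K)
    (ae_of_all _ fun τ => (S τ).continuous.comp (hH.comp (continuous_sub_right τ)))

theorem norm_integral_apply_shift_sub_le (hS : ∀ᵐ τ ∂μ, ∀ x, ‖S τ x‖ ≤ g τ * ‖x‖)
    (hg : 0 ≤ᵐ[μ] g) (hgi : Integrable g μ) {K : ℝ} (hK : ∀ t, ‖H t‖ ≤ K)
    (hm : ∀ t, AEStronglyMeasurable (fun τ => S τ (H (t - τ))) μ)
    {T ε : ℝ} (hT : ∀ t, ‖H (t + T) - H t‖ ≤ ε) (t : ℝ) :
    ‖∫ τ, S τ (H (t + T - τ)) ∂μ - ∫ τ, S τ (H (t - τ)) ∂μ‖ ≤ (∫ τ, g τ ∂μ) * ε := by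
  have hi : ∀ s, Integrable (fun τ => S τ (H (s - τ))) μ := fun s =>
    integrable_apply_of_norm_le hS hg hgi (fun τ => hK (s - τ)) (hm s)
  rw [← integral_sub (hi (t + T)) (hi t)]
  simp_rw [← map_sub]
  refine norm_integral_apply_le hS hg hgi fun τ => ?_
  rw [show t + T - τ = t - τ + T by ring]
  exact hT (t - τ)

end Convolution

theorem convolution_preserves_almostPeriodic_general
    {X : Type*} [NormedAddCommGroup X] [NormedSpace ℝ X]
    (α β θ : ℝ) (hα : 0 < α) (hβ : 0 < β) (hθ1 : θ < 1)
    (S : ℝ → X →L[ℝ] X)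
    (hS : ∀ τ > (0:ℝ), ∀ x : X, ‖S τ x‖ ≤ α * (τ ^ (-θ) + 1) * Real.exp (-β * τ) * ‖x‖)
    (H : ℝ → X) (hH : IsAlmostPeriodic H)
    (K : ℝ) (hK : ∀ t, ‖H t‖ ≤ K)
    (hmeas : ∀ t : ℝ, AEStronglyMeasurable (fun τ => S τ (H (t - τ)))
      (volume.restrict (Set.Ioi (0:ℝ)))) :
    (∀ t : ℝ, IntegrableOn (fun τ => S τ (H (t - τ))) (Set.Ioi 0)) ∧
    (∀ t : ℝ, ‖∫ τ in Set.Ioi (0:ℝ), S τ (H (t - τ))‖ ≤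
        α * (β ^ (θ - 1) * Real.Gamma (1 - θ) + 1 / β) * K) ∧
    IsAlmostPeriodic (fun t => ∫ τ in Set.Ioi (0:ℝ), S τ (H (t - τ))) ∧
    (∀ T : ℝ, ∀ ε : ℝ, (∀ t, ‖H (t + T) - H t‖ ≤ ε) →
      ∀ t : ℝ, ‖(∫ τ in Set.Ioi (0:ℝ), S τ (H (t + T - τ))) -
          ∫ τ in Set.Ioi (0:ℝ), S τ (H (t - τ))‖ ≤
        α * (β ^ (θ - 1) * Real.Gamma (1 - θ) + 1 / β) * ε) := by
  set g : ℝ → ℝ := fun τ => α * (τ ^ (-θ) + 1) * exp (-β * τ)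
  have hSg : ∀ᵐ τ ∂volume.restrict (Ioi 0), ∀ x, ‖S τ x‖ ≤ g τ * ‖x‖ := by
    filter_upwards [ae_restrict_mem measurableSet_Ioi] with τ hτ using hS τ hτ
  have hg : 0 ≤ᵐ[volume.restrict (Ioi 0)] g := by
    filter_upwards [ae_restrict_mem measurableSet_Ioi] with τ hτ
    have : 0 ≤ τ ^ (-θ) := rpow_nonneg hτ.le _
    positivity
  have hgi : IntegrableOn g (Ioi 0) := integrableOn_singular_exp_kernel hβ hθ1
  have hgC : ∫ τ in Ioi 0, g τ = α * (β ^ (θ - 1) * Gamma (1 - θ) + 1 / β) :=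
    integral_singular_exp_kernel hβ hθ1
  have hshift := fun (T ε : ℝ) (hT : ∀ t, ‖H (t + T) - H t‖ ≤ ε) =>
    norm_integral_apply_shift_sub_le hSg hg hgi hK hmeas hT
  rw [← hgC]
  exact ⟨fun t => integrable_apply_of_norm_le hSg hg hgi (fun τ => hK (t - τ)) (hmeas t),
    fun t => norm_integral_apply_le hSg hg hgi fun τ => hK (t - τ),
    hH.of_norm_shift_sub_le (continuous_integral_apply_sub hSg hg hgi hH.1 hK hmeas)
      (integral_nonneg_of_ae hg) hshift,
    hshift⟩

theorem convolution_preserves_almostPeriodic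
    {X : Type*} [NormedAddCommGroup X] [NormedSpace ℝ X] [CompleteSpace X]
    (α β θ : ℝ) (hα : 0 < α) (hβ : 0 < β) (hθ0 : 0 ≤ θ) (hθ1 : θ < 1)
    (S : ℝ → X →L[ℝ] X)
    (hS : ∀ τ > (0:ℝ), ∀ x : X, ‖S τ x‖ ≤ α * (τ ^ (-θ) + 1) * Real.exp (-β * τ) * ‖x‖)
    (H : ℝ → X) (hH : IsAlmostPeriodic H)
    (K : ℝ) (hK : ∀ t, ‖H t‖ ≤ K)
    (hmeas : ∀ t : ℝ, AEStronglyMeasurable (fun τ => S τ (H (t - τ)))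
      (volume.restrict (Set.Ioi (0:ℝ)))) :
    (∀ t : ℝ, IntegrableOn (fun τ => S τ (H (t - τ))) (Set.Ioi 0)) ∧
    (∀ t : ℝ, ‖∫ τ in Set.Ioi (0:ℝ), S τ (H (t - τ))‖ ≤
        α * (β ^ (θ - 1) * Real.Gamma (1 - θ) + 1 / β) * K) ∧
    IsAlmostPeriodic (fun t => ∫ τ in Set.Ioi (0:ℝ), S τ (H (t - τ))) ∧
    (∀ T : ℝ, ∀ ε : ℝ, (∀ t, ‖H (t + T) - H t‖ ≤ ε) →
      ∀ t : ℝ, ‖(∫ τ in Set.Ioi (0:ℝ), S τ (H (t + T - τ))) -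
          ∫ τ in Set.Ioi (0:ℝ), S τ (H (t - τ))‖ ≤
        α * (β ^ (θ - 1) * Real.Gamma (1 - θ) + 1 / β) * ε) :=
  convolution_preserves_almostPeriodic_general α β θ hα hβ hθ1 S hS H hH K hK hmeas
end

section
/- Gronwall-type exponential decay: let $\sigma>0$, $0\le\theta<1$, $L,\alpha>0$, and let $\phi:[0,\infty)\to[0,\infty)$ be bounded measurable with $\phi(t) \le c\,e^{-\sigma t} + L\alpha\int_0^t ((t-\tau)^{-\theta}+1)e^{-\sigma(t-\tau)}\phi(\tau)\,d\tau$ for all $t\ge0$, where $c\ge0$. Suppose $0<\gamma<\sigma$ satisfies $q:=L\alpha((\sigma-\gamma)^{\theta-1}\Gamma(1-\theta)+\tfrac{1}{\sigma-\gamma})<1$. Then $\phi(t) \le \frac{c}{1-q}e^{-\gamma t}$ for all $t\ge0$. -/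
open MeasureTheory Real intervalIntegral

/-!
Put `w(τ) = e^{γτ} φ(τ)` and let `S` be the supremum of `w` on `[0, t]`. Multiplying the
inequality by `e^{γu}` turns the rate `σ` of the kernel into `σ - γ > 0`, and the kernel
`(s^{-θ} + 1) e^{-(σ-γ)s}` has total mass `(σ-γ)^{θ-1} Γ(1-θ) + 1/(σ-γ)` on `(0, ∞)`. Hence
`w ≤ c + q S` on `[0, t]`, so `S ≤ c + q S`, i.e. `S ≤ c / (1 - q)` because `q < 1`.
-/

noncomputable def decayKernel (θ σ s : ℝ) : ℝ := (s ^ (-θ) + 1) * exp (-σ * s)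

namespace decayKernel

variable {θ σ : ℝ}

lemma nonneg {s : ℝ} (hs : 0 ≤ s) : 0 ≤ decayKernel θ σ s := by
  unfold decayKernel; positivity

lemma integrableOn_Ioi (hθ : θ < 1) (hσ : 0 < σ) :
    IntegrableOn (decayKernel θ σ) (Set.Ioi 0) := by
  have hpow := integrableOn_rpow_mul_exp_neg_mul_rpow (by linarith : (-1 : ℝ) < -θ) one_pos hσ
  simp only [rpow_one] at hpow
  have hexp := integrableOn_exp_mul_Ioi (neg_lt_zero.2 hσ) 0
  refine (hpow.add hexp).congr_fun (fun s _ => ?_) measurableSet_Ioi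
  simp only [decayKernel, Pi.add_apply]; ring

lemma integral_Ioi (hθ : θ < 1) (hσ : 0 < σ) :
    ∫ s in Set.Ioi 0, decayKernel θ σ s = σ ^ (θ - 1) * Gamma (1 - θ) + 1 / σ := by
  have hpow := integrableOn_rpow_mul_exp_neg_mul_rpow (by linarith : (-1 : ℝ) < -θ) one_pos hσ
  simp only [rpow_one] at hpow
  have hexp := integrableOn_exp_mul_Ioi (neg_lt_zero.2 hσ) 0
  have hGamma := integral_rpow_mul_exp_neg_mul_Ioi (sub_pos.2 hθ) hσ
  simp only [sub_sub_cancel_left, ← neg_mul] at hGamma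
  simp only [decayKernel, add_mul, one_mul]
  rw [integral_add hpow hexp, hGamma, integral_exp_mul_Ioi (neg_lt_zero.2 hσ),
    one_div, inv_rpow hσ.le, ← rpow_neg hσ.le, neg_sub]
  simp [div_neg, neg_div]

lemma intervalIntegrable (hθ : θ < 1) (hσ : 0 < σ) {t : ℝ} (ht : 0 ≤ t) :
    IntervalIntegrable (decayKernel θ σ) volume 0 t :=
  (intervalIntegrable_iff_integrableOn_Ioc_of_le ht).2
    ((integrableOn_Ioi hθ hσ).mono_set Set.Ioc_subset_Ioi_self)

lemma intervalIntegral_le (hθ : θ < 1) (hσ : 0 < σ) {t : ℝ} (ht : 0 ≤ t) :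
    ∫ s in 0..t, decayKernel θ σ s ≤ σ ^ (θ - 1) * Gamma (1 - θ) + 1 / σ := by
  rw [integral_of_le ht, ← integral_Ioi hθ hσ]
  exact setIntegral_mono_set (integrableOn_Ioi hθ hσ)
    ((ae_restrict_mem measurableSet_Ioi).mono fun s hs => nonneg (le_of_lt hs))
    Set.Ioc_subset_Ioi_self.eventuallyLE

end decayKernel

lemma integral_decayKernel_mul_le {θ σ γ M u : ℝ} {φ : ℝ → ℝ} (hθ : θ < 1) (hγσ : γ < σ)
    (hu : 0 ≤ u) (hM : 0 ≤ M) (hφ0 : ∀ τ ∈ Set.Ioc 0 u, 0 ≤ φ τ)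
    (hφM : ∀ τ ∈ Set.Ioc 0 u, φ τ ≤ M * exp (-γ * τ)) :
    ∫ τ in 0..u, decayKernel θ σ (u - τ) * φ τ ≤
      M * exp (-γ * u) * ((σ - γ) ^ (θ - 1) * Gamma (1 - θ) + 1 / (σ - γ)) := by
  have hβ : 0 < σ - γ := sub_pos.2 hγσ
  have hker : IntervalIntegrable (fun τ => decayKernel θ (σ - γ) (u - τ)) volume 0 u := by
    simpa using ((decayKernel.intervalIntegrable hθ hβ hu).comp_sub_left u).symm
  rw [integral_of_le hu]
  calc ∫ τ in Set.Ioc 0 u, decayKernel θ σ (u - τ) * φ τ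
      ≤ ∫ τ in Set.Ioc 0 u, M * exp (-γ * u) * decayKernel θ (σ - γ) (u - τ) := by
        refine setIntegral_mono_of_nonneg
          (fun τ hτ => mul_nonneg (decayKernel.nonneg (sub_nonneg.2 hτ.2)) (hφ0 τ hτ))
          (fun τ hτ => ?_) (hker.1.const_mul _)
        have hshift : decayKernel θ σ (u - τ) * (M * exp (-γ * τ)) =
            M * exp (-γ * u) * decayKernel θ (σ - γ) (u - τ) := by
          have hexp : exp (-σ * (u - τ)) * exp (-γ * τ) =
              exp (-γ * u) * exp (-(σ - γ) * (u - τ)) := by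
            rw [← exp_add, ← exp_add]; ring_nf
          simp only [decayKernel]
          linear_combination ((u - τ) ^ (-θ) + 1) * M * hexp
        rw [← hshift]
        exact mul_le_mul_of_nonneg_left (hφM τ hτ) (decayKernel.nonneg (sub_nonneg.2 hτ.2))
    _ = M * exp (-γ * u) * ∫ s in 0..u, decayKernel θ (σ - γ) s := by
        rw [MeasureTheory.integral_const_mul, ← integral_of_le hu, integral_comp_sub_left,
          sub_self, sub_zero]
    _ ≤ M * exp (-γ * u) * ((σ - γ) ^ (θ - 1) * Gamma (1 - θ) + 1 / (σ - γ)) :=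
        mul_le_mul_of_nonneg_left (decayKernel.intervalIntegral_le hθ hβ hu) (by positivity)

lemma le_div_one_sub_of_le_add_mul_sSup {α : Type*} {s : Set α} {F : α → ℝ} {c q : ℝ}
    (hq : q < 1) (hbdd : BddAbove (F '' s)) (h : ∀ x ∈ s, F x ≤ c + q * sSup (F '' s))
    {x : α} (hx : x ∈ s) : F x ≤ c / (1 - q) := by
  have hS : sSup (F '' s) ≤ c + q * sSup (F '' s) :=
    csSup_le ⟨F x, Set.mem_image_of_mem F hx⟩ (Set.forall_mem_image.2 h)
  calc F x ≤ sSup (F '' s) := le_csSup hbdd (Set.mem_image_of_mem F hx)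
    _ ≤ c / (1 - q) := by rw [le_div_iff₀ (sub_pos.2 hq)]; linarith

lemma le_mul_exp_neg_mul_iff {a b γ τ : ℝ} : a ≤ b * exp (-γ * τ) ↔ exp (γ * τ) * a ≤ b := by
  rw [neg_mul, exp_neg, ← div_eq_mul_inv, le_div_iff₀' (exp_pos _)]

lemma exp_mul_le_of_le_volterra {θ σ γ L α c M u : ℝ} {φ : ℝ → ℝ} (hθ : θ < 1) (hγσ : γ < σ)
    (hLα : 0 ≤ L * α) (hc : 0 ≤ c) (hu : 0 ≤ u) (hM : 0 ≤ M)
    (hφ0 : ∀ τ ∈ Set.Ioc 0 u, 0 ≤ φ τ) (hφM : ∀ τ ∈ Set.Ioc 0 u, φ τ ≤ M * exp (-γ * τ))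
    (hφu : φ u ≤ c * exp (-σ * u) + L * α * ∫ τ in 0..u, decayKernel θ σ (u - τ) * φ τ) :
    exp (γ * u) * φ u ≤
      c + L * α * ((σ - γ) ^ (θ - 1) * Gamma (1 - θ) + 1 / (σ - γ)) * M := by
  set K := (σ - γ) ^ (θ - 1) * Gamma (1 - θ) + 1 / (σ - γ)
  have hdecay : exp (-(σ - γ) * u) ≤ 1 :=
    exp_le_one_iff.2 (mul_nonpos_of_nonpos_of_nonneg (by linarith) hu)
  have hexp₁ : exp (γ * u) * exp (-σ * u) = exp (-(σ - γ) * u) := by rw [← exp_add]; ring_nf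
  have hexp₂ : exp (γ * u) * exp (-γ * u) = 1 := by rw [← exp_add]; ring_nf; exact exp_zero
  calc exp (γ * u) * φ u
      ≤ exp (γ * u) * (c * exp (-σ * u) + L * α * (M * exp (-γ * u) * K)) := by
        gcongr
        exact hφu.trans <| add_le_add_right
          (mul_le_mul_of_nonneg_left (integral_decayKernel_mul_le hθ hγσ hu hM hφ0 hφM) hLα) _
    _ = c * exp (-(σ - γ) * u) + L * α * K * M := by
        linear_combination c * hexp₁ + L * α * M * K * hexp₂
    _ ≤ c + L * α * K * M := by gcongr; exact mul_le_of_le_one_right hc hdecay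

theorem gronwall_exponential_decay_general
    (σ L α θ γ c : ℝ) (hθ1 : θ < 1)
    (hL : 0 < L) (hα : 0 < α) (hc : 0 ≤ c)
    (hγσ : γ < σ)
    (hq : L * α * ((σ - γ) ^ (θ - 1) * Real.Gamma (1 - θ) + 1 / (σ - γ)) < 1)
    (φ : ℝ → ℝ)
    (hφnonneg : ∀ t, 0 ≤ φ t) (hφbdd : ∃ C, ∀ t, φ t ≤ C)
    (hφ : ∀ t ≥ (0:ℝ), φ t ≤ c * Real.exp (-σ * t) +
      L * α * ∫ τ in (0:ℝ)..t, ((t - τ) ^ (-θ) + 1) * Real.exp (-σ * (t - τ)) * φ τ) :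
    ∀ t ≥ (0:ℝ), φ t ≤
      c / (1 - L * α * ((σ - γ) ^ (θ - 1) * Real.Gamma (1 - θ) + 1 / (σ - γ)))
        * Real.exp (-γ * t) := by
  intro t ht
  obtain ⟨C, hC⟩ := hφbdd
  set F : ℝ → ℝ := fun τ => exp (γ * τ) * φ τ
  have hbdd : BddAbove (F '' Set.Icc 0 t) := by
    refine ⟨exp (|γ| * t) * C, Set.forall_mem_image.2 fun τ hτ => ?_⟩
    have hγτ : γ * τ ≤ |γ| * t := by nlinarith [le_abs_self γ, abs_nonneg γ, hτ.1, hτ.2]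
    exact mul_le_mul (exp_le_exp.2 hγτ) (hC τ) (hφnonneg τ) (exp_pos _).le
  have hS0 : 0 ≤ sSup (F '' Set.Icc 0 t) :=
    (mul_nonneg (exp_pos _).le (hφnonneg 0)).trans
      (le_csSup hbdd (Set.mem_image_of_mem F ⟨le_rfl, ht⟩))
  have hFt : F t ≤ c / (1 - L * α * ((σ - γ) ^ (θ - 1) * Gamma (1 - θ) + 1 / (σ - γ))) := by
    refine le_div_one_sub_of_le_add_mul_sSup hq hbdd (fun u hu => ?_) ⟨ht, le_rfl⟩
    refine exp_mul_le_of_le_volterra hθ1 hγσ (mul_pos hL hα).le hc hu.1 hS0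
      (fun τ _ => hφnonneg τ) (fun τ hτ => ?_) (hφ u hu.1)
    exact le_mul_exp_neg_mul_iff.2 <|
      le_csSup hbdd (Set.mem_image_of_mem F ⟨hτ.1.le, hτ.2.trans hu.2⟩)
  exact le_mul_exp_neg_mul_iff.2 hFt

theorem gronwall_exponential_decay
    (σ L α θ γ c : ℝ) (hσ : 0 < σ) (hθ0 : 0 ≤ θ) (hθ1 : θ < 1)
    (hL : 0 < L) (hα : 0 < α) (hc : 0 ≤ c)
    (hγ0 : 0 < γ) (hγσ : γ < σ)
    (hq : L * α * ((σ - γ) ^ (θ - 1) * Real.Gamma (1 - θ) + 1 / (σ - γ)) < 1)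
    (φ : ℝ → ℝ) (hφmeas : Measurable φ)
    (hφnonneg : ∀ t, 0 ≤ φ t) (hφbdd : ∃ C, ∀ t, φ t ≤ C)
    (hφ : ∀ t ≥ (0:ℝ), φ t ≤ c * Real.exp (-σ * t) +
      L * α * ∫ τ in (0:ℝ)..t, ((t - τ) ^ (-θ) + 1) * Real.exp (-σ * (t - τ)) * φ τ) :
    ∀ t ≥ (0:ℝ), φ t ≤
      c / (1 - L * α * ((σ - γ) ^ (θ - 1) * Real.Gamma (1 - θ) + 1 / (σ - γ)))
        * Real.exp (-γ * t) :=
  gronwall_exponential_decay_general σ L α θ γ c hθ1 hL hα hc hγσ hq φ hφnonneg hφbdd hφ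
end

section
/- Let $X,Y$ be Banach spaces, $\alpha>0$, $0<\sigma\le\beta$, $0\le\theta<1$. Let $(T_t)_{t\ge0}$ be a semigroup of operators on $Y$ with $\|T_t u_0\|_Y \le e^{-\sigma t}\|u_0\|_Y$, and $(T_tB)_{t>0}$ operators from $X$ to $Y$ with $\|T_tB x\|_Y \le \alpha(t^{-\theta}+1)e^{-\beta t}\|x\|_X$. Let $G:Y\times\mathbb{R}_+\to X$ satisfy $\sup_{t\ge0}\|G(0,t)\|_X =: b < \infty$ and $\|G(u_1,t)-G(u_2,t)\|_X \le L\|u_1-u_2\|_Y$ for $\|u_i\|_Y\le\rho$. If $u,\hat u:[0,\infty)\to Y$ are two bounded mild solutions, i.e. $u(t)-\hat u(t) = T_t(u(0)-\hat u(0)) + \int_0^t T_{t-\tau}B[G(u(\tau),\tau)-G(\hat u(\tau),\tau)]\,d\tau$, with $\|u(t)\|,\|\hat u(t)\|\le\rho$ for all $t$, and if $0<\gamma<\sigma$ satisfies $L\alpha((\sigma-\gamma)^{\theta-1}\Gamma(1-\theta)+\tfrac{1}{\sigma-\gamma})=:q<1$, then $\|u(t)-\hat u(t)\|_Y \le \frac{1}{1-q}e^{-\gamma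 t}\|u(0)-\hat u(0)\|_Y$ for all $t\ge0$. -/
/-!
Put `Δ = u - uh` and `w s = exp (γ s) ‖Δ s‖`, and let `M` be the maximum of `w` on `[0, t]`.
For `s ≤ t`, the mild-solution formula, the Lipschitz bound on `G` and the bound on `T_{s-τ} B`
give `‖Δ τ‖ ≤ M e^{-γτ}` inside the integral, and `e^{γs} e^{-β(s-τ)} e^{-γτ} ≤ e^{-(σ-γ)(s-τ)}`
because `σ ≤ β`. Hence `w s ≤ ‖Δ 0‖ + L α M ∫₀^∞ (r^{-θ} + 1) e^{-(σ-γ) r} dr = ‖Δ 0‖ + q M`,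
the integral being a Gamma integral. Taking `s` where the maximum is attained gives
`M ≤ ‖Δ 0‖ / (1 - q)`.
-/

open MeasureTheory Real intervalIntegral Set

lemma integrableOn_rpow_neg_mul_exp_neg_mul_Ioi {θ c : ℝ} (hθ : θ < 1) (hc : 0 < c) :
    IntegrableOn (fun r : ℝ => r ^ (-θ) * exp (-c * r)) (Ioi 0) := by
  simpa only [rpow_one] using
    integrableOn_rpow_mul_exp_neg_mul_rpow (p := 1) (by linarith) one_pos hc

lemma integrableOn_rpow_neg_add_one_mul_exp_neg_mul_Ioi {θ c : ℝ} (hθ : θ < 1) (hc : 0 < c) :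
    IntegrableOn (fun r : ℝ => (r ^ (-θ) + 1) * exp (-c * r)) (Ioi 0) := by
  simp only [add_mul, one_mul]
  exact (integrableOn_rpow_neg_mul_exp_neg_mul_Ioi hθ hc).add (exp_neg_integrableOn_Ioi 0 hc)

lemma integral_rpow_neg_add_one_mul_exp_neg_mul_Ioi {θ c : ℝ} (hθ : θ < 1) (hc : 0 < c) :
    ∫ r in Ioi (0:ℝ), (r ^ (-θ) + 1) * exp (-c * r) = c ^ (θ - 1) * Gamma (1 - θ) + 1 / c := by
  have hpow := integral_rpow_mul_exp_neg_mul_Ioi (a := 1 - θ) (sub_pos.2 hθ) hc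
  have hexp := integral_rpow_mul_exp_neg_mul_Ioi (a := 1) one_pos hc
  rw [sub_sub_cancel_left, one_div, inv_rpow hc.le, ← rpow_neg hc.le, neg_sub] at hpow
  simp only [sub_self, rpow_zero, one_mul, rpow_one, Gamma_one, mul_one] at hexp
  simp only [add_mul, one_mul]
  rw [MeasureTheory.integral_add (integrableOn_rpow_neg_mul_exp_neg_mul_Ioi hθ hc)
    (exp_neg_integrableOn_Ioi 0 hc)]
  simp only [neg_mul]
  rw [hpow, hexp]

lemma intervalIntegral_rpow_neg_add_one_mul_exp_neg_mul_le {θ c s : ℝ} (hθ : θ < 1) (hc : 0 < c)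
    (hs : 0 ≤ s) :
    ∫ r in (0:ℝ)..s, (r ^ (-θ) + 1) * exp (-c * r) ≤ c ^ (θ - 1) * Gamma (1 - θ) + 1 / c := by
  rw [integral_of_le hs, ← integral_rpow_neg_add_one_mul_exp_neg_mul_Ioi hθ hc]
  refine setIntegral_mono_set (integrableOn_rpow_neg_add_one_mul_exp_neg_mul_Ioi hθ hc) ?_
    (ae_of_all _ Ioc_subset_Ioi_self)
  filter_upwards [ae_restrict_mem measurableSet_Ioi] with r (hr : 0 < r)
  positivity

lemma norm_integral_convolution_le {X Y : Type*} [NormedAddCommGroup X] [NormedSpace ℝ X]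
    [NormedAddCommGroup Y] [NormedSpace ℝ Y] {TB : ℝ → X →L[ℝ] Y} {F : ℝ → X}
    {α β θ γ c C s : ℝ} (hα : 0 ≤ α) (hθ : θ < 1) (hc : 0 < c) (hcβ : c + γ ≤ β) (hC : 0 ≤ C)
    (hs : 0 ≤ s)
    (hTB : ∀ t > (0:ℝ), ∀ x : X, ‖TB t x‖ ≤ α * (t ^ (-θ) + 1) * exp (-β * t) * ‖x‖)
    (hF : ∀ τ ∈ Ioo 0 s, ‖F τ‖ ≤ C * exp (-γ * τ)) :
    ‖∫ τ in (0:ℝ)..s, TB (s - τ) (F τ)‖ ≤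
      α * C * (c ^ (θ - 1) * Gamma (1 - θ) + 1 / c) * exp (-γ * s) := by
  set k : ℝ → ℝ := fun r => (r ^ (-θ) + 1) * exp (-c * r)
  have hk : IntervalIntegrable k volume 0 s :=
    (intervalIntegrable_iff_integrableOn_Ioc_of_le hs).2
      ((integrableOn_rpow_neg_add_one_mul_exp_neg_mul_Ioi hθ hc).mono_set Ioc_subset_Ioi_self)
  have hk_nonneg : 0 ≤ ∫ r in (0:ℝ)..s, k r :=
    integral_nonneg hs fun r hr => by have := hr.1; positivity
  have hbound : ∀ᵐ τ ∂volume.restrict (uIoc 0 s),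
      ‖TB (s - τ) (F τ)‖ ≤ α * C * exp (-γ * s) * k (s - τ) := by
    rw [uIoc_of_le hs, ← Measure.restrict_congr_set Ioo_ae_eq_Ioc]
    filter_upwards [ae_restrict_mem measurableSet_Ioo] with τ hτ
    have hr : 0 < s - τ := sub_pos.2 hτ.2
    have hexp : exp (-β * (s - τ)) * exp (-γ * τ) ≤ exp (-γ * s) * exp (-c * (s - τ)) := by
      rw [← exp_add, ← exp_add]
      exact exp_le_exp.2 (by nlinarith)
    calc ‖TB (s - τ) (F τ)‖
        ≤ α * ((s - τ) ^ (-θ) + 1) * exp (-β * (s - τ)) * (C * exp (-γ * τ)) :=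
          (hTB _ hr _).trans (by gcongr; exact hF τ hτ)
      _ = α * C * ((s - τ) ^ (-θ) + 1) * (exp (-β * (s - τ)) * exp (-γ * τ)) := by ring
      _ ≤ α * C * ((s - τ) ^ (-θ) + 1) * (exp (-γ * s) * exp (-c * (s - τ))) := by gcongr
      _ = α * C * exp (-γ * s) * k (s - τ) := by ring
  calc ‖∫ τ in (0:ℝ)..s, TB (s - τ) (F τ)‖
      ≤ |∫ τ in (0:ℝ)..s, α * C * exp (-γ * s) * k (s - τ)| :=
        norm_integral_le_abs_of_norm_le hbound
          (by simpa using (hk.comp_sub_left s).symm.const_mul (α * C * exp (-γ * s)))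
    _ = α * C * exp (-γ * s) * ∫ r in (0:ℝ)..s, k r := by
        rw [intervalIntegral.integral_const_mul, intervalIntegral.integral_comp_sub_left,
          sub_self, sub_zero, abs_of_nonneg (by positivity)]
    _ ≤ α * C * exp (-γ * s) * (c ^ (θ - 1) * Gamma (1 - θ) + 1 / c) := by
        gcongr
        exact intervalIntegral_rpow_neg_add_one_mul_exp_neg_mul_le hθ hc hs
    _ = α * C * (c ^ (θ - 1) * Gamma (1 - θ) + 1 / c) * exp (-γ * s) := by ring

lemma IsCompact.le_div_one_sub_of_le_add_mul_bound {α : Type*} [TopologicalSpace α] {K : Set α}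
    {f : α → ℝ} {A q : ℝ} (hK : IsCompact K) (hf : ContinuousOn f K) (hq : q < 1)
    (h : ∀ s ∈ K, ∀ M, (∀ τ ∈ K, f τ ≤ M) → f s ≤ A + q * M) {x : α} (hx : x ∈ K) :
    f x ≤ A / (1 - q) := by
  obtain ⟨s, hs, hmax⟩ := hK.exists_isMaxOn ⟨x, hx⟩ hf
  have hfs : f s ≤ A + q * f s := h s hs (f s) hmax
  calc f x ≤ f s := hmax hx
    _ ≤ A / (1 - q) := by rw [le_div_iff₀ (sub_pos.2 hq)]; linarith

lemma le_mul_exp_neg_mul_of_exp_mul_le {γ t a b : ℝ} (h : exp (γ * t) * a ≤ b) :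
    a ≤ b * exp (-γ * t) := by
  rwa [neg_mul, exp_neg, ← div_eq_mul_inv, le_div_iff₀ (exp_pos _), mul_comm]

lemma exp_mul_norm_apply_add_le {Y : Type*} [NormedAddCommGroup Y] [NormedSpace ℝ Y]
    {S : Y →L[ℝ] Y} {σ γ s B : ℝ} (hγσ : γ ≤ σ) (hs : 0 ≤ s)
    (hS : ∀ y : Y, ‖S y‖ ≤ exp (-σ * s) * ‖y‖) {y I : Y} (hI : ‖I‖ ≤ B * exp (-γ * s)) :
    exp (γ * s) * ‖S y + I‖ ≤ ‖y‖ + B := by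
  have hdecay : exp (γ * s) * exp (-σ * s) ≤ 1 := by
    rw [← exp_add]; exact exp_le_one_iff.2 (by nlinarith)
  have hcancel : exp (γ * s) * exp (-γ * s) = 1 := by rw [← exp_add, neg_mul, add_neg_cancel, exp_zero]
  calc exp (γ * s) * ‖S y + I‖
      ≤ exp (γ * s) * (exp (-σ * s) * ‖y‖ + B * exp (-γ * s)) := by
        gcongr; exact (norm_add_le _ _).trans (add_le_add (hS y) hI)
    _ = exp (γ * s) * exp (-σ * s) * ‖y‖ + B * (exp (γ * s) * exp (-γ * s)) := by ring
    _ ≤ ‖y‖ + B := by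
        rw [hcancel, mul_one]
        gcongr
        exact mul_le_of_le_one_left (norm_nonneg y) hdecay

theorem exponential_stability_general
    {X Y : Type*} [NormedAddCommGroup X] [NormedSpace ℝ X]
    [NormedAddCommGroup Y] [NormedSpace ℝ Y]
    (α σ β θ L ρ γ : ℝ)
    (hα : 0 < α) (hσβ : σ ≤ β) (hθ1 : θ < 1)
    (hL : 0 < L)
    (T : ℝ → Y →L[ℝ] Y)
    (hT : ∀ t ≥ (0:ℝ), ∀ y : Y, ‖T t y‖ ≤ Real.exp (-σ * t) * ‖y‖)
    (TB : ℝ → X →L[ℝ] Y)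
    (hTB : ∀ t > (0:ℝ), ∀ x : X,
      ‖TB t x‖ ≤ α * (t ^ (-θ) + 1) * Real.exp (-β * t) * ‖x‖)
    (G : Y → ℝ → X)
    (hGlip : ∀ (u₁ u₂ : Y) (t : ℝ), 0 ≤ t → ‖u₁‖ ≤ ρ → ‖u₂‖ ≤ ρ →
      ‖G u₁ t - G u₂ t‖ ≤ L * ‖u₁ - u₂‖)
    (u uh : ℝ → Y) (huc : Continuous u) (huhc : Continuous uh)
    (hub : ∀ t ≥ (0:ℝ), ‖u t‖ ≤ ρ) (huhb : ∀ t ≥ (0:ℝ), ‖uh t‖ ≤ ρ)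
    (hmild : ∀ t ≥ (0:ℝ), u t - uh t = T t (u 0 - uh 0) +
      ∫ τ in (0:ℝ)..t, TB (t - τ) (G (u τ) τ - G (uh τ) τ))
    (hγσ : γ < σ)
    (hq : L * α * ((σ - γ) ^ (θ - 1) * Real.Gamma (1 - θ) + 1 / (σ - γ)) < 1) :
    ∀ t ≥ (0:ℝ), ‖u t - uh t‖ ≤
      (1 / (1 - L * α * ((σ - γ) ^ (θ - 1) * Real.Gamma (1 - θ) + 1 / (σ - γ))))
        * Real.exp (-γ * t) * ‖u 0 - uh 0‖ := by
  intro t ht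
  set q := L * α * ((σ - γ) ^ (θ - 1) * Gamma (1 - θ) + 1 / (σ - γ))
  have hstep : ∀ s ∈ Icc 0 t, ∀ M, (∀ τ ∈ Icc 0 t, exp (γ * τ) * ‖u τ - uh τ‖ ≤ M) →
      exp (γ * s) * ‖u s - uh s‖ ≤ ‖u 0 - uh 0‖ + q * M := by
    intro s hs M hM
    have hM0 : 0 ≤ M := (by positivity : (0:ℝ) ≤ _).trans (hM 0 ⟨le_rfl, ht⟩)
    have hG : ∀ τ ∈ Ioo 0 s, ‖G (u τ) τ - G (uh τ) τ‖ ≤ L * M * exp (-γ * τ) := by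
      intro τ hτ
      have hΔ : ‖u τ - uh τ‖ ≤ M * exp (-γ * τ) :=
        le_mul_exp_neg_mul_of_exp_mul_le (hM τ ⟨hτ.1.le, hτ.2.le.trans hs.2⟩)
      calc ‖G (u τ) τ - G (uh τ) τ‖ ≤ L * ‖u τ - uh τ‖ :=
            hGlip _ _ τ hτ.1.le (hub τ hτ.1.le) (huhb τ hτ.1.le)
        _ ≤ L * M * exp (-γ * τ) := by rw [mul_assoc]; gcongr
    have hI := norm_integral_convolution_le hα.le hθ1 (sub_pos.2 hγσ) (by linarith)
      (by positivity) hs.1 hTB hG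
    rw [hmild s hs.1]
    refine (exp_mul_norm_apply_add_le hγσ.le hs.1 (hT s hs.1) hI).trans (le_of_eq ?_)
    ring
  have hw := isCompact_Icc.le_div_one_sub_of_le_add_mul_bound (by fun_prop) hq hstep ⟨ht, le_rfl⟩
  calc ‖u t - uh t‖ ≤ ‖u 0 - uh 0‖ / (1 - q) * exp (-γ * t) := le_mul_exp_neg_mul_of_exp_mul_le hw
    _ = 1 / (1 - q) * exp (-γ * t) * ‖u 0 - uh 0‖ := by ring

theorem exponential_stability
    {X Y : Type*} [NormedAddCommGroup X] [NormedSpace ℝ X]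
    [NormedAddCommGroup Y] [NormedSpace ℝ Y] [CompleteSpace Y]
    (α σ β θ L b ρ γ : ℝ)
    (hα : 0 < α) (hσ : 0 < σ) (hσβ : σ ≤ β) (hθ0 : 0 ≤ θ) (hθ1 : θ < 1)
    (hL : 0 < L) (hb : 0 ≤ b) (hρ : 0 < ρ)
    (T : ℝ → Y →L[ℝ] Y)
    (hT : ∀ t ≥ (0:ℝ), ∀ y : Y, ‖T t y‖ ≤ Real.exp (-σ * t) * ‖y‖)
    (TB : ℝ → X →L[ℝ] Y)
    (hTB : ∀ t > (0:ℝ), ∀ x : X,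
      ‖TB t x‖ ≤ α * (t ^ (-θ) + 1) * Real.exp (-β * t) * ‖x‖)
    (G : Y → ℝ → X)
    (hGb : ∀ t ≥ (0:ℝ), ‖G 0 t‖ ≤ b)
    (hGlip : ∀ (u₁ u₂ : Y) (t : ℝ), 0 ≤ t → ‖u₁‖ ≤ ρ → ‖u₂‖ ≤ ρ →
      ‖G u₁ t - G u₂ t‖ ≤ L * ‖u₁ - u₂‖)
    (u uh : ℝ → Y) (huc : Continuous u) (huhc : Continuous uh)
    (hub : ∀ t ≥ (0:ℝ), ‖u t‖ ≤ ρ) (huhb : ∀ t ≥ (0:ℝ), ‖uh t‖ ≤ ρ)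
    (hmild : ∀ t ≥ (0:ℝ), u t - uh t = T t (u 0 - uh 0) +
      ∫ τ in (0:ℝ)..t, TB (t - τ) (G (u τ) τ - G (uh τ) τ))
    (hγ0 : 0 < γ) (hγσ : γ < σ)
    (hq : L * α * ((σ - γ) ^ (θ - 1) * Real.Gamma (1 - θ) + 1 / (σ - γ)) < 1) :
    ∀ t ≥ (0:ℝ), ‖u t - uh t‖ ≤
      (1 / (1 - L * α * ((σ - γ) ^ (θ - 1) * Real.Gamma (1 - θ) + 1 / (σ - γ))))
        * Real.exp (-γ * t) * ‖u 0 - uh 0‖ :=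
  exponential_stability_general α σ β θ L ρ γ hα hσβ hθ1 hL T hT TB hTB G hGlip u uh huc huhc hub
    huhb hmild hγσ hq
end
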